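/- arXiv:2410.15110 — 10 statements merged into one kernel-verified Lean document; each statement's English description precedes it below -/
import Mathlib

section
/- Let n ∈ ℕ, let r ∈ {1,…,n}, let a, a' ∈ ℝ^n with a_r = 1 and a'_r = −1, let b, b' ∈ ℝ, and let ℓ, u ∈ ℝ^n with ℓ_j ≤ u_j for all j. Define β := b − Σ_{j ≠ r} max(a_j·ℓ_j, a_j·u_j), which is the lower bound on x_r propagated by the reason constraint Σ_j a_j x_j ≥ b over the box [ℓ, u]. If the conflict constraint Σ_j a'_j x_j ≥ b' is infeasible after this propagation, i.e. −β + Σ_{j ≠ r} max(a'_j·ℓ_j, a'_j·u_j) < b', then the resolvent eliminating x_r, namely Σ_{j ≠ r} (a_j + a'_j) x_j ≥ b + b', is infeasible over the box [ℓ, u], i.e. Σ_{j ≠ r} max((a_j + a'_j)·ℓ_j, (a_j + a'_j)·u_j) < b + b'. -/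
/-!
Maximal activity is subadditive in the coefficient vector, because
`max (x + x') (y + y') ≤ max x y + max x' y'` termwise. So, over the variables `j ≠ r`, the
resolvent's maximal activity is at most `(b - β) + ∑_{j ≠ r} max (a'_j ℓ_j) (a'_j u_j)`, and the
conflict's infeasibility after propagation bounds this by `(b - β) + (b' + β) = b + b'`.
-/

def maxActivity {ι R : Type*} [Mul R] [Max R] [AddCommMonoid R] (s : Finset ι) (a ℓ u : ι → R) :
    R :=
  ∑ j ∈ s, max (a j * ℓ j) (a j * u j)

theorem maxActivity_add_le {ι R : Type*} [NonUnitalNonAssocSemiring R] [LinearOrder R]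
    [IsOrderedAddMonoid R] (s : Finset ι) (a a' ℓ u : ι → R) :
    maxActivity s (a + a') ℓ u ≤ maxActivity s a ℓ u + maxActivity s a' ℓ u := by
  rw [maxActivity, maxActivity, maxActivity, ← Finset.sum_add_distrib]
  refine Finset.sum_le_sum fun j _ => ?_
  simpa only [Pi.add_apply, add_mul] using max_add_add_le_max_add_max

theorem resolvent_infeasible_of_tight_propagation_general
    (n : ℕ) (r : Fin n) (a a' : Fin n → ℝ)
    (b b' : ℝ)
    (ℓ u : Fin n → ℝ)
    (β : ℝ)
    (hβ : β = b - ∑ j ∈ Finset.univ.erase r, max (a j * ℓ j) (a j * u j))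
    (hconfl : -β + ∑ j ∈ Finset.univ.erase r, max (a' j * ℓ j) (a' j * u j) < b') :
    ∑ j ∈ Finset.univ.erase r, max ((a j + a' j) * ℓ j) ((a j + a' j) * u j) < b + b' := by
  have hsub := maxActivity_add_le (Finset.univ.erase r) a a' ℓ u
  simp only [maxActivity, Pi.add_apply] at hsub
  linarith

/-- Proposition 1 (tight propagation resolution): if the reason constraint
`∑ a_j x_j ≥ b` (with `a_r = 1`) propagates the lower bound `β` on `x_r` over the
box `[ℓ,u]`, and the conflict constraint `∑ a'_j x_j ≥ b'` (with `a'_r = -1`) is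
infeasible after this propagation, then the resolvent eliminating `x_r` is
infeasible over the box. -/
theorem resolvent_infeasible_of_tight_propagation
    (n : ℕ) (r : Fin n) (a a' : Fin n → ℝ)
    (har : a r = 1) (ha'r : a' r = -1) (b b' : ℝ)
    (ℓ u : Fin n → ℝ) (hlu : ∀ j, ℓ j ≤ u j)
    (β : ℝ)
    (hβ : β = b - ∑ j ∈ Finset.univ.erase r, max (a j * ℓ j) (a j * u j))
    (hconfl : -β + ∑ j ∈ Finset.univ.erase r, max (a' j * ℓ j) (a' j * u j) < b') :
    ∑ j ∈ Finset.univ.erase r, max ((a j + a' j) * ℓ j) ((a j + a' j) * u j) < b + b' :=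
  resolvent_infeasible_of_tight_propagation_general n r a a' b b' ℓ u β hβ hconfl
end

section
/- Let J be a finite index set, r ∉ J, a : J → ℝ with a_j ≥ 0 for all j ∈ J, b ∈ ℝ, and P ⊆ J. Set b̃ := b − Σ_{j∈P} a_j and assume 0 < b̃ < 1. Then: (i) every x ∈ {0,1}^{J ∪ {r}} satisfying x_r + Σ_{j∈J} a_j x_j ≥ b also satisfies the weakened and coefficient-tightened constraint b̃·x_r + Σ_{j∈J∖P} min(a_j, b̃)·x_j ≥ b̃; and (ii) every x ∈ ℝ^{J ∪ {r}} with x_j = 0 for all j ∈ J∖P that satisfies b̃·x_r + Σ_{j∈J∖P} min(a_j, b̃)·x_j ≥ b̃ has x_r ≥ 1. -/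
/-!
Weakening the variables of `P` with their global upper bound `1` turns the reason constraint into
`x r + ∑_{J \ P} a j * x j ≥ b̃`. Coefficient tightening keeps a constraint over binaries valid: a
binary point either sets some variable whose coefficient is at least `b̃`, which alone covers the
right-hand side, or none, in which case capping the coefficients at `b̃` changes nothing. Under the
local bounds every variable of `J \ P` is `0`, so the tightened constraint reads `b̃ * x r ≥ b̃`.
-/

open Finset

section

variable {ι : Type*} {s : Finset ι} {a x : ι → ℝ}

lemma sum_mul_sub_sum_le_sum_sdiff_mul [DecidableEq ι] {P : Finset ι} (hP : P ⊆ s)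
    (ha : ∀ j ∈ P, 0 ≤ a j) (hx : ∀ j ∈ P, x j ≤ 1) :
    ∑ j ∈ s, a j * x j - ∑ j ∈ P, a j ≤ ∑ j ∈ s \ P, a j * x j := by
  have hP_le : ∑ j ∈ P, a j * x j ≤ ∑ j ∈ P, a j :=
    sum_le_sum fun j hj => mul_le_of_le_one_right (ha j hj) (hx j hj)
  rw [← sum_sdiff hP]
  linarith

lemma sum_min_mul_nonneg {c : ℝ} (ha : ∀ j ∈ s, 0 ≤ a j) (hc : 0 ≤ c)
    (hx : ∀ j ∈ s, 0 ≤ x j) : 0 ≤ ∑ j ∈ s, min (a j) c * x j :=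
  sum_nonneg fun j hj => mul_nonneg (le_min (ha j hj) hc) (hx j hj)

theorem le_sum_min_mul_of_le_sum_mul {c : ℝ} (hx : ∀ j ∈ s, x j = 0 ∨ x j = 1)
    (ha : ∀ j ∈ s, 0 ≤ a j) (hc : 0 ≤ c) (h : c ≤ ∑ j ∈ s, a j * x j) :
    c ≤ ∑ j ∈ s, min (a j) c * x j := by
  by_cases hbig : ∃ j ∈ s, x j = 1 ∧ c ≤ a j
  · obtain ⟨j, hj, hxj, hcj⟩ := hbig
    have hx_nonneg : ∀ k ∈ s, 0 ≤ x k := fun k hk => by rcases hx k hk with h | h <;> simp [h]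
    calc c = min (a j) c * x j := by rw [min_eq_right hcj, hxj, mul_one]
      _ ≤ ∑ k ∈ s, min (a k) c * x k :=
        single_le_sum (fun k hk => mul_nonneg (le_min (ha k hk) hc) (hx_nonneg k hk)) hj
  · push Not at hbig
    calc c ≤ ∑ j ∈ s, a j * x j := h
      _ = ∑ j ∈ s, min (a j) c * x j := by
        refine sum_congr rfl fun j hj => ?_
        rcases hx j hj with hxj | hxj
        · simp [hxj]
        · rw [min_eq_left (hbig j hj hxj).le]

end

theorem coefTight_reduction_valid_and_tight_general
    {ι : Type*} [DecidableEq ι] (J : Finset ι) (r : ι)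
    (a : ι → ℝ) (ha : ∀ j ∈ J, 0 ≤ a j) (b : ℝ)
    (P : Finset ι) (hP : P ⊆ J)
    (btil : ℝ) (hbt : btil = b - ∑ j ∈ P, a j)
    (h0 : 0 < btil) :
    (∀ x : ι → ℝ, (∀ j ∈ insert r J, x j = 0 ∨ x j = 1) →
        x r + ∑ j ∈ J, a j * x j ≥ b →
        btil * x r + ∑ j ∈ J \ P, min (a j) btil * x j ≥ btil) ∧
    (∀ x : ι → ℝ, (∀ j ∈ J \ P, x j = 0) →
        btil * x r + ∑ j ∈ J \ P, min (a j) btil * x j ≥ btil →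
        x r ≥ 1) := by
  constructor
  · intro x hx hge
    have hx_bounds : ∀ j ∈ J, 0 ≤ x j ∧ x j ≤ 1 := fun j hj => by
      rcases hx j (mem_insert_of_mem hj) with h | h <;> simp [h]
    have hx_free : ∀ j ∈ J \ P, x j = 0 ∨ x j = 1 := fun j hj =>
      hx j (mem_insert_of_mem (mem_sdiff.1 hj).1)
    have ha_free : ∀ j ∈ J \ P, 0 ≤ a j := fun j hj => ha j (mem_sdiff.1 hj).1
    rcases hx r (mem_insert_self r J) with hr0 | hr1
    · have hweak := sum_mul_sub_sum_le_sum_sdiff_mul hP (fun j hj => ha j (hP hj))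
        (fun j hj => (hx_bounds j (hP hj)).2)
      have htight := le_sum_min_mul_of_le_sum_mul hx_free ha_free h0.le (by linarith)
      rw [hr0]
      linarith
    · have hnonneg := sum_min_mul_nonneg ha_free h0.le fun j hj =>
        (hx_bounds j (mem_sdiff.1 hj).1).1
      rw [hr1]
      linarith
  · intro x hx hge
    rw [sum_eq_zero fun j hj => by rw [hx j hj, mul_zero], add_zero] at hge
    exact le_of_mul_le_mul_left (by linarith) h0

/-- Proposition 2: validity and tight propagation of the weakened and
coefficient-tightened reason constraint for pure binary programs. -/
theorem coefTight_reduction_valid_and_tight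
    {ι : Type*} [DecidableEq ι] (J : Finset ι) (r : ι) (hr : r ∉ J)
    (a : ι → ℝ) (ha : ∀ j ∈ J, 0 ≤ a j) (b : ℝ)
    (P : Finset ι) (hP : P ⊆ J)
    (btil : ℝ) (hbt : btil = b - ∑ j ∈ P, a j)
    (h0 : 0 < btil) (h1 : btil < 1) :
    (∀ x : ι → ℝ, (∀ j ∈ insert r J, x j = 0 ∨ x j = 1) →
        x r + ∑ j ∈ J, a j * x j ≥ b →
        btil * x r + ∑ j ∈ J \ P, min (a j) btil * x j ≥ btil) ∧
    (∀ x : ι → ℝ, (∀ j ∈ J \ P, x j = 0) →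
        btil * x r + ∑ j ∈ J \ P, min (a j) btil * x j ≥ btil →
        x r ≥ 1) :=
  coefTight_reduction_valid_and_tight_general J r a ha b P hP btil hbt h0
end

section
/- Let J be a finite index set, r ∉ J, a : J → ℝ with a_j ≥ 0 for all j ∈ J, b ∈ ℝ, and P ⊆ J. Set b̃ := b − Σ_{j∈P} a_j and assume 0 < b̃ < 1, so that f(b̃) = b̃ where f(t) := t − ⌊t⌋. Define ψ(t) := ⌊t⌋ + min(1, f(t)/f(b̃)). Then every x ∈ {0,1}^{J ∪ {r}} satisfying x_r + Σ_{j∈J} a_j x_j ≥ b also satisfies the cMIR constraint x_r + Σ_{j∈J∖P} ψ(a_j)·x_j − Σ_{j∈P} ψ(−a_j)·x_j ≥ 1 − Σ_{j∈P} ψ(−a_j). -/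
/-!
For `0 < B ≤ 1` the MIR function `φ_B t = ⌊t⌋ + min 1 (fract t / B)` is the pointwise minimum
over `n ∈ ℤ` of the functions `n + max 0 (t - n) / B`, and the minimum is attained. This makes
`φ_B` nondecreasing and subadditive, and `φ_B B = 1` when `B < 1`. Hence for binary `z` with
`∑ c_j z_j ≥ B`, summing over the support of `z` gives `1 = φ_B B ≤ φ_B (∑ c_j z_j) ≤ ∑ φ_B(c_j) z_j`.
Complementing the variables in `P` turns the reason constraint into such an inequality with
`B = b̃`, and complementing back turns the conclusion into the cMIR cut.
-/

open Finset

noncomputable def mir (B t : ℝ) : ℝ := (⌊t⌋ : ℝ) + min 1 (Int.fract t / B)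

section mir

variable {B : ℝ}

lemma mir_le_int_add (hB0 : 0 < B) (hB1 : B ≤ 1) (t : ℝ) (n : ℤ) :
    mir B t ≤ n + max 0 (t - n) / B := by
  have hfract := Int.fract_nonneg t
  rcases le_or_gt n ⌊t⌋ with hn | hn
  · have hn' : (n : ℝ) ≤ ⌊t⌋ := by exact_mod_cast hn
    have hscale : (⌊t⌋ - n : ℝ) ≤ (⌊t⌋ - n) / B := le_div_self (by linarith) hB0 hB1
    have hsplit : t - n = (⌊t⌋ - n) + Int.fract t := by rw [Int.fract]; ring
    calc mir B t ≤ ⌊t⌋ + Int.fract t / B := by unfold mir; gcongr; exact min_le_right _ _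
      _ ≤ n + (t - n) / B := by rw [hsplit, add_div]; linarith
      _ ≤ n + max 0 (t - n) / B := by gcongr; exact le_max_right _ _
  · have hn' : (⌊t⌋ : ℝ) + 1 ≤ n := by exact_mod_cast hn
    have : 0 ≤ max 0 (t - n) / B := div_nonneg (le_max_left _ _) hB0.le
    unfold mir
    linarith [min_le_left 1 (Int.fract t / B)]

lemma exists_mir_eq_int_add (hB0 : 0 < B) (t : ℝ) :
    ∃ n : ℤ, mir B t = n + max 0 (t - n) / B := by
  rcases le_or_gt (Int.fract t) B with hle | hlt
  · refine ⟨⌊t⌋, ?_⟩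
    rw [mir, min_eq_right ((div_le_one hB0).mpr hle), ← Int.fract,
      max_eq_right (Int.fract_nonneg t)]
  · refine ⟨⌊t⌋ + 1, ?_⟩
    have hneg : t - ((⌊t⌋ + 1 : ℤ) : ℝ) ≤ 0 := by
      push_cast; linarith [Int.lt_floor_add_one t]
    rw [mir, min_eq_left ((one_le_div hB0).mpr hlt.le), max_eq_left hneg]
    push_cast; ring

lemma mir_add_le (hB0 : 0 < B) (hB1 : B ≤ 1) (s t : ℝ) :
    mir B (s + t) ≤ mir B s + mir B t := by
  obtain ⟨n, hn⟩ := exists_mir_eq_int_add hB0 s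
  obtain ⟨m, hm⟩ := exists_mir_eq_int_add hB0 t
  have hpos : max 0 (s + t - (n + m : ℤ)) ≤ max 0 (s - n) + max 0 (t - m) := by
    push_cast
    exact max_le (by positivity) (by linarith [le_max_right 0 (s - n), le_max_right 0 (t - m)])
  calc mir B (s + t) ≤ (n + m : ℤ) + max 0 (s + t - (n + m : ℤ)) / B :=
        mir_le_int_add hB0 hB1 _ _
    _ ≤ (n + m : ℤ) + (max 0 (s - n) + max 0 (t - m)) / B := by gcongr
    _ = mir B s + mir B t := by rw [hn, hm, add_div]; push_cast; ring

lemma mir_mono (hB0 : 0 < B) (hB1 : B ≤ 1) : Monotone (mir B) := by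
  intro s t hst
  obtain ⟨n, hn⟩ := exists_mir_eq_int_add hB0 t
  calc mir B s ≤ n + max 0 (s - n) / B := mir_le_int_add hB0 hB1 s n
    _ ≤ n + max 0 (t - n) / B := by gcongr
    _ = mir B t := hn.symm

lemma mir_intCast (B : ℝ) (n : ℤ) : mir B n = n := by
  simp [mir]

lemma mir_self (hB0 : 0 < B) (hB1 : B < 1) : mir B B = 1 := by
  rw [mir, Int.floor_eq_zero_iff.mpr ⟨hB0.le, hB1⟩, Int.fract_eq_self.mpr ⟨hB0.le, hB1⟩,
    div_self hB0.ne']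
  simp

lemma mir_sum_le (hB0 : 0 < B) (hB1 : B ≤ 1) {ι : Type*} (s : Finset ι) (c : ι → ℝ) :
    mir B (∑ j ∈ s, c j) ≤ ∑ j ∈ s, mir B (c j) :=
  Finset.le_sum_of_subadditive (mir B) (by simpa using (mir_intCast B 0).le)
    (mir_add_le hB0 hB1) s c

lemma one_le_sum_mir_mul (hB0 : 0 < B) (hB1 : B < 1) {ι : Type*} (T : Finset ι)
    (c z : ι → ℝ) (hz : ∀ j ∈ T, z j = 0 ∨ z j = 1) (h : B ≤ ∑ j ∈ T, c j * z j) :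
    1 ≤ ∑ j ∈ T, mir B (c j) * z j := by
  classical
  have hsupport : ∀ g : ι → ℝ, ∑ j ∈ T, g j * z j = ∑ j ∈ T with z j = 1, g j := by
    intro g
    rw [sum_filter]
    refine sum_congr rfl fun j hj => ?_
    rcases hz j hj with hzj | hzj <;> simp [hzj]
  rw [hsupport] at h ⊢
  calc 1 = mir B B := (mir_self hB0 hB1).symm
    _ ≤ mir B (∑ j ∈ T with z j = 1, c j) := mir_mono hB0 hB1.le h
    _ ≤ _ := mir_sum_le hB0 hB1.le _ c

end mir

section complement

variable {ι : Type*} [DecidableEq ι] (r : ι) (P : Finset ι)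

def complementCoeff (a : ι → ℝ) (j : ι) : ℝ := if j = r then 1 else if j ∈ P then -a j else a j

def complementVar (x : ι → ℝ) (j : ι) : ℝ := if j ∈ P then 1 - x j else x j

lemma complementVar_binary {x : ι → ℝ} {j : ι} (hx : x j = 0 ∨ x j = 1) :
    complementVar P x j = 0 ∨ complementVar P x j = 1 := by
  unfold complementVar
  split_ifs <;> rcases hx with h | h <;> simp [h]

lemma sum_complementCoeff_mul {J : Finset ι} (hr : r ∉ J) (hP : P ⊆ J) (g : ℝ → ℝ)
    (a x : ι → ℝ) :
    ∑ j ∈ insert r J, g (complementCoeff r P a j) * complementVar P x j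
      = g 1 * x r + ∑ j ∈ J \ P, g (a j) * x j + ∑ j ∈ P, g (-a j)
        - ∑ j ∈ P, g (-a j) * x j := by
  have hrP : r ∉ P := fun h => hr (hP h)
  have hout : ∀ j ∈ J \ P, g (complementCoeff r P a j) * complementVar P x j = g (a j) * x j := by
    intro j hj
    have hjr : j ≠ r := by rintro rfl; exact hr (mem_sdiff.mp hj).1
    simp [complementCoeff, complementVar, hjr, (mem_sdiff.mp hj).2]
  have hin : ∀ j ∈ P,
      g (complementCoeff r P a j) * complementVar P x j = g (-a j) - g (-a j) * x j := by
    intro j hj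
    have hjr : j ≠ r := by rintro rfl; exact hrP hj
    simp [complementCoeff, complementVar, hjr, hj, mul_sub]
  rw [sum_insert hr, ← sum_sdiff hP, sum_congr rfl hout, sum_congr rfl hin, sum_sub_distrib]
  simp [complementCoeff, complementVar, hrP]
  ring

end complement

theorem cMIR_valid_general
    {ι : Type*} [DecidableEq ι] (J : Finset ι) (r : ι) (hr : r ∉ J)
    (a : ι → ℝ) (b : ℝ)
    (P : Finset ι) (hP : P ⊆ J)
    (btil : ℝ) (hbt : btil = b - ∑ j ∈ P, a j)
    (h0 : 0 < btil) (h1 : btil < 1)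
    (ψ : ℝ → ℝ)
    (hψ : ∀ t, ψ t = (⌊t⌋ : ℝ) + min 1 (Int.fract t / Int.fract btil))
    (x : ι → ℝ) (hx : ∀ j ∈ insert r J, x j = 0 ∨ x j = 1)
    (hsat : x r + ∑ j ∈ J, a j * x j ≥ b) :
    x r + ∑ j ∈ J \ P, ψ (a j) * x j - ∑ j ∈ P, ψ (-a j) * x j
      ≥ 1 - ∑ j ∈ P, ψ (-a j) := by
  have hψ_eq : ψ = mir btil := by
    funext t
    rw [hψ, Int.fract_eq_self.mpr ⟨h0.le, h1⟩, mir]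
  have hreason : btil ≤ ∑ j ∈ insert r J, complementCoeff r P a j * complementVar P x j := by
    have hsplit := sum_sdiff hP (f := fun j => a j * x j)
    have hexpand := sum_complementCoeff_mul r P hr hP (fun t => t) a x
    simp only [one_mul, neg_mul, sum_neg_distrib] at hexpand
    linarith
  have hcut := one_le_sum_mir_mul h0 h1 _ _ _
    (fun j hj => complementVar_binary P (hx j hj)) hreason
  have hone : mir btil 1 = 1 := by simpa using mir_intCast btil 1
  rw [sum_complementCoeff_mul r P hr hP, hone] at hcut
  rw [hψ_eq]
  linarith

/-- Proposition 3 (validity part): the cMIR constraint, obtained by complementing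
all variables in `P` and applying the MIR cut, is valid for all binary points
satisfying the reason constraint `x_r + ∑_{j∈J} a_j x_j ≥ b`. -/
theorem cMIR_valid
    {ι : Type*} [DecidableEq ι] (J : Finset ι) (r : ι) (hr : r ∉ J)
    (a : ι → ℝ) (ha : ∀ j ∈ J, 0 ≤ a j) (b : ℝ)
    (P : Finset ι) (hP : P ⊆ J)
    (btil : ℝ) (hbt : btil = b - ∑ j ∈ P, a j)
    (h0 : 0 < btil) (h1 : btil < 1)
    (ψ : ℝ → ℝ)
    (hψ : ∀ t, ψ t = (⌊t⌋ : ℝ) + min 1 (Int.fract t / Int.fract btil))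
    (x : ι → ℝ) (hx : ∀ j ∈ insert r J, x j = 0 ∨ x j = 1)
    (hsat : x r + ∑ j ∈ J, a j * x j ≥ b) :
    x r + ∑ j ∈ J \ P, ψ (a j) * x j - ∑ j ∈ P, ψ (-a j) * x j
      ≥ 1 - ∑ j ∈ P, ψ (-a j) :=
  cMIR_valid_general J r hr a b P hP btil hbt h0 h1 ψ hψ x hx hsat
end

section
/- Let J be a finite index set, r ∉ J, a : J → ℝ with a_j ≥ 0 for all j ∈ J, b ∈ ℝ, and P ⊆ J. Set b̃ := b − Σ_{j∈P} a_j and assume 0 < b̃ < 1, so that f(b̃) = b̃ where f(t) := t − ⌊t⌋. Define ψ(t) := ⌊t⌋ + min(1, f(t)/f(b̃)). Then every x ∈ ℝ^{J ∪ {r}} with x_j = 0 for all j ∈ J∖P and 0 ≤ x_j ≤ 1 for all j ∈ P that satisfies the cMIR constraint x_r + Σ_{j∈J∖P} ψ(a_j)·x_j − Σ_{j∈P} ψ(−a_j)·x_j ≥ 1 − Σ_{j∈P} ψ(−a_j) has x_r ≥ 1. -/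
/-!
Only the sign of `ψ(-a_j)` matters: the MIR function never exceeds the ceiling, so
`ψ(-a_j) ≤ ⌈-a_j⌉ ≤ 0`. Hence `∑_{j∈P} ψ(-a_j) x_j ≥ ∑_{j∈P} ψ(-a_j)` whenever `x_j ≤ 1`, and with
the variables of `J∖P` fixed to `0` the cMIR constraint collapses to `x_r ≥ 1`.
-/

theorem Int.floor_add_min_one_fract_div_le_ceil (t c : ℝ) :
    (⌊t⌋ : ℝ) + min 1 (Int.fract t / c) ≤ ⌈t⌉ := by
  rcases Int.fract_eq_zero_or_add_one_sub_ceil t with h | h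
  · rw [h, zero_div, min_eq_right zero_le_one, add_zero]
    exact_mod_cast Int.floor_le_ceil t
  · have hceil : (⌈t⌉ : ℝ) = ⌊t⌋ + 1 := by
      rw [Int.fract] at h
      linarith
    rw [hceil]
    gcongr
    exact min_le_left _ _

theorem Finset.sum_le_sum_mul_of_nonpos_of_le_one {ι : Type*} {s : Finset ι} {c x : ι → ℝ}
    (hc : ∀ j ∈ s, c j ≤ 0) (hx : ∀ j ∈ s, x j ≤ 1) :
    ∑ j ∈ s, c j ≤ ∑ j ∈ s, c j * x j :=
  Finset.sum_le_sum fun j hj => by nlinarith [hc j hj, hx j hj]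

theorem cMIR_propagates_tightly_general
    {ι : Type*} [DecidableEq ι] (J : Finset ι) (r : ι)
    (a : ι → ℝ) (ha : ∀ j ∈ J, 0 ≤ a j)
    (P : Finset ι) (hP : P ⊆ J)
    (btil : ℝ)
    (ψ : ℝ → ℝ)
    (hψ : ∀ t, ψ t = (⌊t⌋ : ℝ) + min 1 (Int.fract t / Int.fract btil))
    (x : ι → ℝ)
    (hx0 : ∀ j ∈ J \ P, x j = 0)
    (hxP : ∀ j ∈ P, 0 ≤ x j ∧ x j ≤ 1)
    (hcmir : x r + ∑ j ∈ J \ P, ψ (a j) * x j - ∑ j ∈ P, ψ (-a j) * x j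
      ≥ 1 - ∑ j ∈ P, ψ (-a j)) :
    x r ≥ 1 := by
  have hψ_nonpos : ∀ j ∈ P, ψ (-a j) ≤ 0 := fun j hj => by
    have hceil : ⌈-a j⌉ ≤ 0 := Int.ceil_le.mpr (by simpa using ha j (hP hj))
    rw [hψ]
    exact (Int.floor_add_min_one_fract_div_le_ceil _ _).trans (by exact_mod_cast hceil)
  have hfixed : ∑ j ∈ J \ P, ψ (a j) * x j = 0 :=
    Finset.sum_eq_zero fun j hj => by rw [hx0 j hj, mul_zero]
  have hfree := Finset.sum_le_sum_mul_of_nonpos_of_le_one hψ_nonpos fun j hj => (hxP j hj).2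
  linarith

/-- Proposition 3 (tight propagation part): under the local bounds fixing the
variables in `J∖P` to 0 and letting the variables in `P` range in `[0,1]`,
the cMIR constraint forces `x_r ≥ 1` over the reals. -/
theorem cMIR_propagates_tightly
    {ι : Type*} [DecidableEq ι] (J : Finset ι) (r : ι) (hr : r ∉ J)
    (a : ι → ℝ) (ha : ∀ j ∈ J, 0 ≤ a j) (b : ℝ)
    (P : Finset ι) (hP : P ⊆ J)
    (btil : ℝ) (hbt : btil = b - ∑ j ∈ P, a j)
    (h0 : 0 < btil) (h1 : btil < 1)
    (ψ : ℝ → ℝ)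
    (hψ : ∀ t, ψ t = (⌊t⌋ : ℝ) + min 1 (Int.fract t / Int.fract btil))
    (x : ι → ℝ)
    (hx0 : ∀ j ∈ J \ P, x j = 0)
    (hxP : ∀ j ∈ P, 0 ≤ x j ∧ x j ≤ 1)
    (hcmir : x r + ∑ j ∈ J \ P, ψ (a j) * x j - ∑ j ∈ P, ψ (-a j) * x j
      ≥ 1 - ∑ j ∈ P, ψ (-a j)) :
    x r ≥ 1 :=
  cMIR_propagates_tightly_general J r a ha P hP btil ψ hψ x hx0 hxP hcmir
end

section
/- Let J be a finite index set, r ∉ J, a : J → ℝ with a_j ≥ 0 for all j ∈ J, b ∈ ℝ, and P ⊆ J. Let P_W := {j ∈ P : a_j ∉ ℤ} and P_Z := P ∖ P_W. Set b̃ := b − Σ_{j∈P} a_j and assume 0 < b̃ < 1. With f(t) := t − ⌊t⌋, define ψ(t) := ⌊t⌋ + min(1, f(t)/f(b̃)) and ψ_w(t) := ⌊t⌋ + min(1, f(t)/f(b − Σ_{j∈P_W} a_j)). Then every x ∈ ℝ^{J ∪ {r}} with 0 ≤ x_j ≤ 1 for all j ∈ J ∪ {r} that satisfies the cMIR constraint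 x_r + Σ_{j∈J∖P} ψ(a_j)·x_j − Σ_{j∈P} ψ(−a_j)·x_j ≥ 1 − Σ_{j∈P} ψ(−a_j) also satisfies the wMIR constraint x_r + Σ_{j∈P_Z} a_j·x_j + Σ_{j∈J∖P} ψ_w(a_j)·x_j ≥ ⌈b − Σ_{j∈P_W} a_j⌉. -/
/-!
Write `m := ∑_{j ∈ P_Z} a_j ∈ ℤ`, so that `b - ∑_{j ∈ P_W} a_j = b̃ + m`. Shifting the right-hand side
by an integer changes neither its fractional part nor the MIR rounding, so `ψ_w = ψ`, and
`⌈b̃ + m⌉ = 1 + m`. Rewrite the cMIR constraint as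
`x_r + ∑_{J∖P} ψ(a_j) x_j + ∑_P ψ(-a_j) (1 - x_j) ≥ 1`. On `P_Z` the rounding is exact,
`ψ(-a_j) = -a_j`, which contributes `∑_{P_Z} a_j x_j - m`; on `P_W` we have `a_j > 0`, so
`ψ(-a_j) ≤ ⌊-a_j⌋ + 1 ≤ 0` and those terms can only lower the left-hand side.
-/

open Finset

/-- The paper's `ψ` is `mirRound b̃` and its `ψ_w` is `mirRound (b - ∑_{j ∈ P_W} a_j)`. -/
noncomputable def mirRound (β t : ℝ) : ℝ := ⌊t⌋ + min 1 (Int.fract t / Int.fract β)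

@[simp]
lemma mirRound_add_intCast (β t : ℝ) (m : ℤ) : mirRound (β + m) t = mirRound β t := by
  simp [mirRound]

@[simp]
lemma mirRound_intCast (β : ℝ) (z : ℤ) : mirRound β z = z := by
  simp [mirRound]

lemma mirRound_nonpos (β : ℝ) {t : ℝ} (ht : t < 0) : mirRound β t ≤ 0 := by
  have hfloor : (⌊t⌋ : ℝ) ≤ -1 := by
    exact_mod_cast Int.le_sub_one_of_lt (Int.floor_lt.2 (by simpa using ht : t < (0 : ℤ)))
  unfold mirRound
  linarith [min_le_left 1 (Int.fract t / Int.fract β)]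

section Sums

variable {ι : Type*} {s : Finset ι} {a x : ι → ℝ}

lemma exists_sum_eq_intCast (h : ∀ j ∈ s, ∃ z : ℤ, a j = z) : ∃ m : ℤ, ∑ j ∈ s, a j = m := by
  choose! z hz using h
  exact ⟨∑ j ∈ s, z j, by push_cast; exact sum_congr rfl hz⟩

lemma sum_mirRound_neg_mul_one_sub_of_intCast (β : ℝ) (h : ∀ j ∈ s, ∃ z : ℤ, a j = z) :
    ∑ j ∈ s, mirRound β (-a j) * (1 - x j) = ∑ j ∈ s, a j * x j - ∑ j ∈ s, a j := by
  rw [← sum_sub_distrib]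
  refine sum_congr rfl fun j hj => ?_
  obtain ⟨z, hz⟩ := h j hj
  rw [hz, ← Int.cast_neg, mirRound_intCast]
  push_cast
  ring

lemma sum_mirRound_neg_mul_one_sub_nonpos (β : ℝ) (ha : ∀ j ∈ s, 0 < a j)
    (hx : ∀ j ∈ s, x j ≤ 1) : ∑ j ∈ s, mirRound β (-a j) * (1 - x j) ≤ 0 :=
  sum_nonpos fun j hj =>
    mul_nonpos_of_nonpos_of_nonneg (mirRound_nonpos β (neg_neg_of_pos (ha j hj)))
      (sub_nonneg.2 (hx j hj))

end Sums

theorem cMIR_dominates_wMIR_general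
    {ι : Type*} [DecidableEq ι] (J : Finset ι) (r : ι)
    (a : ι → ℝ) (ha : ∀ j ∈ J, 0 ≤ a j) (b : ℝ)
    (P : Finset ι) (hP : P ⊆ J)
    (PW PZ : Finset ι)
    (hPWsub : PW ⊆ P)
    (hPWspec : ∀ j ∈ P, (j ∈ PW ↔ ¬ ∃ z : ℤ, a j = (z : ℝ)))
    (hPZ : PZ = P \ PW)
    (btil : ℝ) (hbt : btil = b - ∑ j ∈ P, a j)
    (h0 : 0 < btil) (h1 : btil < 1)
    (ψ ψw : ℝ → ℝ)
    (hψ : ∀ t, ψ t = (⌊t⌋ : ℝ) + min 1 (Int.fract t / Int.fract btil))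
    (hψw : ∀ t, ψw t = (⌊t⌋ : ℝ)
      + min 1 (Int.fract t / Int.fract (b - ∑ j ∈ PW, a j)))
    (x : ι → ℝ) (hx : ∀ j ∈ insert r J, 0 ≤ x j ∧ x j ≤ 1)
    (hcmir : x r + ∑ j ∈ J \ P, ψ (a j) * x j - ∑ j ∈ P, ψ (-a j) * x j
      ≥ 1 - ∑ j ∈ P, ψ (-a j)) :
    x r + ∑ j ∈ PZ, a j * x j + ∑ j ∈ J \ P, ψw (a j) * x j
      ≥ (⌈b - ∑ j ∈ PW, a j⌉ : ℝ) := by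
  obtain rfl : ψ = mirRound btil := funext hψ
  subst hPZ
  have hZ : ∀ j ∈ P \ PW, ∃ z : ℤ, a j = z := fun j hj =>
    not_not.1 fun h => (mem_sdiff.1 hj).2 ((hPWspec j (mem_sdiff.1 hj).1).2 h)
  have hW : ∀ j ∈ PW, 0 < a j := fun j hj =>
    (ha j (hP (hPWsub hj))).lt_of_ne fun h => (hPWspec j (hPWsub hj)).1 hj ⟨0, by simp [← h]⟩
  obtain ⟨m, hm⟩ := exists_sum_eq_intCast hZ
  have hβ : b - ∑ j ∈ PW, a j = btil + m := by
    rw [hbt, ← sum_sdiff hPWsub, hm]; ring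
  obtain rfl : ψw = mirRound btil := funext fun t => by
    rw [hψw, hβ, ← mirRound_add_intCast btil t m]; rfl
  have hceil : ⌈btil + m⌉ = 1 + m := by
    rw [Int.ceil_add_intCast, (Int.ceil_eq_iff (z := 1)).2 ⟨by simpa using h0, by simpa using h1.le⟩]
  have hcmir' : x r + ∑ j ∈ J \ P, mirRound btil (a j) * x j
      + ∑ j ∈ P, mirRound btil (-a j) * (1 - x j) ≥ 1 := by
    simp only [mul_one_sub, sum_sub_distrib]; linarith
  rw [← sum_sdiff hPWsub, sum_mirRound_neg_mul_one_sub_of_intCast btil hZ, hm] at hcmir'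
  have hPW := sum_mirRound_neg_mul_one_sub_nonpos btil hW fun j hj =>
    (hx j (mem_insert_of_mem (hP (hPWsub hj)))).2
  rw [hβ, hceil]
  push_cast
  linarith

/-- Proposition 4 (dominance): every point within the bounds `[0,1]` satisfying
the cMIR constraint also satisfies the wMIR constraint. -/
theorem cMIR_dominates_wMIR
    {ι : Type*} [DecidableEq ι] (J : Finset ι) (r : ι) (hr : r ∉ J)
    (a : ι → ℝ) (ha : ∀ j ∈ J, 0 ≤ a j) (b : ℝ)
    (P : Finset ι) (hP : P ⊆ J)
    (PW PZ : Finset ι)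
    (hPWsub : PW ⊆ P)
    (hPWspec : ∀ j ∈ P, (j ∈ PW ↔ ¬ ∃ z : ℤ, a j = (z : ℝ)))
    (hPZ : PZ = P \ PW)
    (btil : ℝ) (hbt : btil = b - ∑ j ∈ P, a j)
    (h0 : 0 < btil) (h1 : btil < 1)
    (ψ ψw : ℝ → ℝ)
    (hψ : ∀ t, ψ t = (⌊t⌋ : ℝ) + min 1 (Int.fract t / Int.fract btil))
    (hψw : ∀ t, ψw t = (⌊t⌋ : ℝ)
      + min 1 (Int.fract t / Int.fract (b - ∑ j ∈ PW, a j)))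
    (x : ι → ℝ) (hx : ∀ j ∈ insert r J, 0 ≤ x j ∧ x j ≤ 1)
    (hcmir : x r + ∑ j ∈ J \ P, ψ (a j) * x j - ∑ j ∈ P, ψ (-a j) * x j
      ≥ 1 - ∑ j ∈ P, ψ (-a j)) :
    x r + ∑ j ∈ PZ, a j * x j + ∑ j ∈ J \ P, ψw (a j) * x j
      ≥ (⌈b - ∑ j ∈ PW, a j⌉ : ℝ) :=
  cMIR_dominates_wMIR_general J r a ha b P hP PW PZ hPWsub hPWspec hPZ btil hbt h0 h1 ψ ψw hψ hψw x
    hx hcmir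
end

section
/- Let J be a finite index set, r ∉ J, a : J → ℝ with a_j ≥ 0 for all j ∈ J, b ∈ ℝ, and P ⊆ J. Let P_W := {j ∈ P : a_j ∉ ℤ} and P_Z := P ∖ P_W. Set b̃ := b − Σ_{j∈P} a_j and assume 0 < b̃ < 1. With f(t) := t − ⌊t⌋, define ψ_w(t) := ⌊t⌋ + min(1, f(t)/f(b − Σ_{j∈P_W} a_j)). Then every x ∈ ℝ^{J ∪ {r}} with x_j = 0 for all j ∈ J∖P and 0 ≤ x_j ≤ 1 for all j ∈ P_Z that satisfies the wMIR constraint x_r + Σ_{j∈P_Z} a_j·x_j + Σ_{j∈J∖P} ψ_w(a_j)·x_j ≥ ⌈b − Σ_{j∈P_W} a_j⌉ has x_r ≥ 1. -/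
/-! The variables of `J ∖ P` are fixed to `0`, so only the `P_Z` part of the left-hand side
survives, and it is at most `Σ_{P_Z} a_j`, an integer `N`. Since
`b - Σ_{P_W} a_j = b̃ + N` with `0 < b̃ < 1`, the right-hand side rounds up to `N + 1`,
leaving `x_r ≥ 1`. -/

open Finset

lemma exists_sum_eq_intCast_s7 {ι R : Type*} [AddCommGroupWithOne R] (s : Finset ι) (f : ι → R)
    (hf : ∀ i ∈ s, ∃ z : ℤ, f i = z) : ∃ N : ℤ, ∑ i ∈ s, f i = N :=
  sum_induction f (fun y => ∃ z : ℤ, y = z)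
    (fun _ _ ⟨m, hm⟩ ⟨n, hn⟩ => ⟨m + n, by rw [hm, hn, Int.cast_add]⟩) ⟨0, Int.cast_zero.symm⟩ hf

lemma Int.ceil_add_intCast_of_pos_of_lt_one {R : Type*} [Ring R] [LinearOrder R]
    [IsStrictOrderedRing R] [FloorRing R] {t : R} (h0 : 0 < t) (h1 : t < 1) (n : ℤ) :
    ⌈t + n⌉ = n + 1 := by
  have hceil : ⌈t⌉ = 1 := Int.ceil_eq_iff.mpr ⟨by simpa using h0, by simpa using h1.le⟩
  rw [Int.ceil_add_intCast, hceil, add_comm]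

lemma sum_mul_le_sum_of_le_one {ι R : Type*} [Semiring R] [PartialOrder R]
    [IsOrderedRing R] (s : Finset ι) {a x : ι → R} (ha : ∀ i ∈ s, 0 ≤ a i)
    (hx : ∀ i ∈ s, x i ≤ 1) : ∑ i ∈ s, a i * x i ≤ ∑ i ∈ s, a i :=
  sum_le_sum fun i hi => mul_le_of_le_one_right (ha i hi) (hx i hi)

theorem wMIR_propagates_tightly_general
    {ι : Type*} [DecidableEq ι] (J : Finset ι) (r : ι)
    (a : ι → ℝ) (ha : ∀ j ∈ J, 0 ≤ a j) (b : ℝ)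
    (P : Finset ι) (hP : P ⊆ J)
    (PW PZ : Finset ι)
    (hPWsub : PW ⊆ P)
    (hPWspec : ∀ j ∈ P, (j ∈ PW ↔ ¬ ∃ z : ℤ, a j = (z : ℝ)))
    (hPZ : PZ = P \ PW)
    (btil : ℝ) (hbt : btil = b - ∑ j ∈ P, a j)
    (h0 : 0 < btil) (h1 : btil < 1)
    (ψw : ℝ → ℝ)
    (x : ι → ℝ)
    (hx0 : ∀ j ∈ J \ P, x j = 0)
    (hxZ : ∀ j ∈ PZ, 0 ≤ x j ∧ x j ≤ 1)
    (hwmir : x r + ∑ j ∈ PZ, a j * x j + ∑ j ∈ J \ P, ψw (a j) * x j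
      ≥ (⌈b - ∑ j ∈ PW, a j⌉ : ℝ)) :
    x r ≥ 1 := by
  subst hPZ
  obtain ⟨N, hN⟩ := exists_sum_eq_intCast_s7 (P \ PW) a fun j hj => by
    obtain ⟨hjP, hjW⟩ := mem_sdiff.mp hj
    simpa using mt (hPWspec j hjP).mpr hjW
  have hrhs : b - ∑ j ∈ PW, a j = btil + N := by
    rw [hbt, ← hN, ← sum_sdiff hPWsub]
    ring
  have hceil : (⌈b - ∑ j ∈ PW, a j⌉ : ℝ) = N + 1 := by
    rw [hrhs, Int.ceil_add_intCast_of_pos_of_lt_one h0 h1, Int.cast_add, Int.cast_one]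
  have hPZ_le : ∑ j ∈ P \ PW, a j * x j ≤ N :=
    hN ▸ sum_mul_le_sum_of_le_one _ (fun j hj => ha j (hP (mem_sdiff.mp hj).1))
      fun j hj => (hxZ j hj).2
  have hfixed : ∑ j ∈ J \ P, ψw (a j) * x j = 0 :=
    sum_eq_zero fun j hj => by rw [hx0 j hj, mul_zero]
  linarith

/-- The wMIR reduced reason constraint propagates `x_r` tightly: under the local
bounds fixing `J∖P` to 0 and letting `P_Z` range in `[0,1]`, it forces `x_r ≥ 1`. -/
theorem wMIR_propagates_tightly
    {ι : Type*} [DecidableEq ι] (J : Finset ι) (r : ι) (hr : r ∉ J)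
    (a : ι → ℝ) (ha : ∀ j ∈ J, 0 ≤ a j) (b : ℝ)
    (P : Finset ι) (hP : P ⊆ J)
    (PW PZ : Finset ι)
    (hPWsub : PW ⊆ P)
    (hPWspec : ∀ j ∈ P, (j ∈ PW ↔ ¬ ∃ z : ℤ, a j = (z : ℝ)))
    (hPZ : PZ = P \ PW)
    (btil : ℝ) (hbt : btil = b - ∑ j ∈ P, a j)
    (h0 : 0 < btil) (h1 : btil < 1)
    (ψw : ℝ → ℝ)
    (hψw : ∀ t, ψw t = (⌊t⌋ : ℝ)
      + min 1 (Int.fract t / Int.fract (b - ∑ j ∈ PW, a j)))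
    (x : ι → ℝ)
    (hx0 : ∀ j ∈ J \ P, x j = 0)
    (hxZ : ∀ j ∈ PZ, 0 ≤ x j ∧ x j ≤ 1)
    (hwmir : x r + ∑ j ∈ PZ, a j * x j + ∑ j ∈ J \ P, ψw (a j) * x j
      ≥ (⌈b - ∑ j ∈ PW, a j⌉ : ℝ)) :
    x r ≥ 1 :=
  wMIR_propagates_tightly_general J r a ha b P hP PW PZ hPWsub hPWspec hPZ btil hbt h0 h1 ψw x hx0
    hxZ hwmir
end

section
/- Let J be a finite index set, r ∉ J, a : J → ℝ with a_j ≥ 0 for all j ∈ J, b ∈ ℝ, and P ⊆ J such that b − Σ_{j∈P} a_j > 0. Then every x ∈ {0,1}^{J ∪ {r}} satisfying x_r + Σ_{j∈J} a_j x_j ≥ b also satisfies the clausal constraint x_r + Σ_{j∈J∖P} x_j ≥ 1. -/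
/-- Correctness of the clause-based reduction: if `b − ∑_{j∈P} a_j > 0`, then the
clause `x_r + ∑_{j∈J∖P} x_j ≥ 1` is valid for all binary points satisfying the
reason constraint `x_r + ∑_{j∈J} a_j x_j ≥ b`. -/
theorem clausal_reduction_valid
    {ι : Type*} [DecidableEq ι] (J : Finset ι) (r : ι) (hr : r ∉ J)
    (a : ι → ℝ) (ha : ∀ j ∈ J, 0 ≤ a j) (b : ℝ)
    (P : Finset ι) (hP : P ⊆ J)
    (hprop : b - ∑ j ∈ P, a j > 0)
    (x : ι → ℝ) (hx : ∀ j ∈ insert r J, x j = 0 ∨ x j = 1)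
    (hsat : x r + ∑ j ∈ J, a j * x j ≥ b) :
    x r + ∑ j ∈ J \ P, x j ≥ 1 := by
  by_contra h
  push_neg at h
  -- x r = 0
  have hxr : x r = 0 := by
    rcases hx r (Finset.mem_insert_self r J) with h0 | h1
    · exact h0
    · exfalso
      have : (0:ℝ) ≤ ∑ j ∈ J \ P, x j := by
        apply Finset.sum_nonneg
        intro j hj
        rcases hx j (Finset.mem_insert_of_mem (Finset.mem_sdiff.mp hj).1) with h | h <;> simp [h]
      linarith
  -- each x j = 0 for j ∈ J \ P
  have hsdiff : ∀ j ∈ J \ P, x j = 0 := by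
    by_contra hc
    push_neg at hc
    obtain ⟨j, hj, hjne⟩ := hc
    have hj1 : x j = 1 := by
      rcases hx j (Finset.mem_insert_of_mem (Finset.mem_sdiff.mp hj).1) with h0 | h1
      · exact absurd h0 hjne
      · exact h1
    have hge : ∑ k ∈ J \ P, x k ≥ 1 := by
      have := Finset.single_le_sum (f := x) (fun k hk => by
        rcases hx k (Finset.mem_insert_of_mem (Finset.mem_sdiff.mp hk).1) with h | h <;> simp [h]) hj
      linarith [hj1]
    linarith
  -- now sum over J splits
  have hsplit : ∑ j ∈ J, a j * x j = ∑ j ∈ P, a j * x j := by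
    rw [← Finset.sum_sdiff hP]
    have : ∑ j ∈ J \ P, a j * x j = 0 :=
      Finset.sum_eq_zero fun j hj => by rw [hsdiff j hj, mul_zero]
    rw [this, zero_add]
  have hle : ∑ j ∈ P, a j * x j ≤ ∑ j ∈ P, a j := by
    apply Finset.sum_le_sum
    intro j hj
    have haj := ha j (hP hj)
    rcases hx j (Finset.mem_insert_of_mem (hP hj)) with h | h <;> simp [h, haj]
  linarith [hsat, hsplit, hle, hxr]
end

section
/- Let N be a finite index set and r, c ∈ N two distinct indices. Let a, a' : N → ℝ with a_c = 1 and a'_c = −1, and let b, b' ∈ ℝ. Let ℓ¹, u¹, ℓ², u² : N∖{c} → ℝ be bounds with ℓ¹_j ≤ ℓ²_j ≤ u²_j ≤ u¹_j for all j ∈ N∖{c}. Define β := min over x ∈ [ℓ¹, u¹] of ( b − a_r·x_r − Σ_{j∈N∖{r,c}} a_j·x_j ), the lower bound on x_c propagated by the constraint Σ_{j∈N} a_j x_j ≥ b over the earlier box. Then every x ∈ [ℓ², u²] (indexed by N∖{c}) satisfying the aggregated constraint (a_r + a'_r)·x_r + Σ_{j∈N∖{r,c}} (a_j + a'_j)·x_j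 ≥ b + b' satisfies a'_r·x_r ≥ β + min over y ∈ [ℓ², u²] of ( b' − Σ_{j∈N∖{r,c}} a'_j·y_j ); that is, the linear combination of the reason constraint Σ_{j∈N} a'_j x_j ≥ b' and the constraint that propagated x_c, eliminating x_c, implies on x_r a bound at least as strong as the one the reason constraint implies using x_c ≥ β. -/
/-! The later box lies inside the earlier one, so every `x` in it satisfies `∑_{j ≠ c} a_j x_j ≤ b - β`,
`b - β` being the maximal activity of `a` over the earlier box. Subtracting this from the aggregated
constraint and bounding `∑_{j ≠ r, c} a'_j x_j` by its maximal activity over the later box leaves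
exactly the claimed bound on `a'_r x_r`. -/

theorem mul_le_max_mul_of_le_of_le {R : Type*} [Ring R] [LinearOrder R] [IsStrictOrderedRing R]
    (a : R) {l t u : R} (hl : l ≤ t) (hu : t ≤ u) :
    a * t ≤ max (a * l) (a * u) := by
  rcases le_total 0 a with ha | ha
  · exact le_max_of_le_right (mul_le_mul_of_nonneg_left hu ha)
  · exact le_max_of_le_left (mul_le_mul_of_nonpos_left hl ha)

theorem Finset.sum_mul_le_sum_max_mul {ι R : Type*} [Ring R] [LinearOrder R]
    [IsStrictOrderedRing R] (s : Finset ι) (a l u x : ι → R)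
    (hx : ∀ j ∈ s, l j ≤ x j ∧ x j ≤ u j) :
    ∑ j ∈ s, a j * x j ≤ ∑ j ∈ s, max (a j * l j) (a j * u j) :=
  Finset.sum_le_sum fun j hj => mul_le_max_mul_of_le_of_le (a j) (hx j hj).1 (hx j hj).2

theorem aggregation_propagates_at_least_as_strong_general
    {ι : Type*} [DecidableEq ι] (N : Finset ι) (r c : ι)
    (hrN : r ∈ N) (hrc : r ≠ c)
    (a a' : ι → ℝ) (b b' : ℝ)
    (ℓ1 u1 ℓ2 u2 : ι → ℝ)
    (hbounds : ∀ j ∈ N.erase c, ℓ1 j ≤ ℓ2 j ∧ ℓ2 j ≤ u2 j ∧ u2 j ≤ u1 j)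
    (β : ℝ)
    (hβ : β = b - ∑ j ∈ N.erase c, max (a j * ℓ1 j) (a j * u1 j))
    (x : ι → ℝ) (hx : ∀ j ∈ N.erase c, ℓ2 j ≤ x j ∧ x j ≤ u2 j)
    (hagg : (a r + a' r) * x r
        + ∑ j ∈ (N.erase c).erase r, (a j + a' j) * x j ≥ b + b') :
    a' r * x r
      ≥ β + (b' - ∑ j ∈ (N.erase c).erase r, max (a' j * ℓ2 j) (a' j * u2 j)) := by
  set K := N.erase c
  have hrK : r ∈ K := Finset.mem_erase.mpr ⟨hrc, hrN⟩
  have hx1 : ∀ j ∈ K, ℓ1 j ≤ x j ∧ x j ≤ u1 j := fun j hj =>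
    ⟨(hbounds j hj).1.trans (hx j hj).1, (hx j hj).2.trans (hbounds j hj).2.2⟩
  have hcont : ∑ j ∈ K, a j * x j ≤ b - β := by
    rw [hβ, sub_sub_cancel]
    exact K.sum_mul_le_sum_max_mul a ℓ1 u1 x hx1
  have hreason := (K.erase r).sum_mul_le_sum_max_mul a' ℓ2 u2 x
    fun j hj => hx j (Finset.mem_of_mem_erase hj)
  rw [← Finset.add_sum_erase K _ hrK] at hcont
  rw [Finset.sum_congr rfl fun j _ => add_mul (a j) (a' j) (x j), Finset.sum_add_distrib] at hagg
  linarith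

/-- Proposition 5: eliminating the continuous variable `x_c` by aggregating the
reason constraint with the constraint that propagated `x_c` yields a constraint
that implies a bound on `x_r` at least as strong as the one the reason constraint
implies using `x_c ≥ β`. -/
theorem aggregation_propagates_at_least_as_strong
    {ι : Type*} [DecidableEq ι] (N : Finset ι) (r c : ι)
    (hrN : r ∈ N) (hcN : c ∈ N) (hrc : r ≠ c)
    (a a' : ι → ℝ) (hac : a c = 1) (ha'c : a' c = -1) (b b' : ℝ)
    (ℓ1 u1 ℓ2 u2 : ι → ℝ)
    (hbounds : ∀ j ∈ N.erase c, ℓ1 j ≤ ℓ2 j ∧ ℓ2 j ≤ u2 j ∧ u2 j ≤ u1 j)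
    (β : ℝ)
    (hβ : β = b - ∑ j ∈ N.erase c, max (a j * ℓ1 j) (a j * u1 j))
    (x : ι → ℝ) (hx : ∀ j ∈ N.erase c, ℓ2 j ≤ x j ∧ x j ≤ u2 j)
    (hagg : (a r + a' r) * x r
        + ∑ j ∈ (N.erase c).erase r, (a j + a' j) * x j ≥ b + b') :
    a' r * x r
      ≥ β + (b' - ∑ j ∈ (N.erase c).erase r, max (a' j * ℓ2 j) (a' j * u2 j)) :=
  aggregation_propagates_at_least_as_strong_general N r c hrN hrc a a' b b' ℓ1 u1 ℓ2 u2 hbounds β hβ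
    x hx hagg
end

section
/- Let N be a finite index set and r, c ∈ N two distinct indices. Let a, a' : N → ℝ with a_c = 1 and a'_c = −1, and let b, b' ∈ ℝ. Let ℓ¹, u¹, ℓ², u² : N∖{c} → ℝ be bounds with ℓ¹_j ≤ ℓ²_j ≤ u²_j ≤ u¹_j for all j ∈ N∖{c}, and assume ℓ²_r ≥ 0 and a_r + a'_r ≤ 0. Define κ := min over x ∈ [ℓ¹, u¹] of ( b − Σ_{j∈N∖{r,c}} a_j·x_j ) plus min over y ∈ [ℓ², u²] of ( b' − Σ_{j∈N∖{r,c}} a'_j·y_j ), and assume κ > 0. Then no x ∈ [ℓ², u²] satisfies the aggregated constraint (a_r + a'_r)·x_r + Σ_{j∈N∖{r,c}} (a_j + a'_j)·x_j ≥ b + b'; i.e., the aggregated constraint is infeasible over the box [ℓ², u²]. -/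
lemma mul_le_max_of_mem {t ℓ u x : ℝ} (h1 : ℓ ≤ x) (h2 : x ≤ u) :
    t * x ≤ max (t * ℓ) (t * u) := by
  rcases le_total t 0 with ht | ht
  · exact le_max_of_le_left (mul_le_mul_of_nonpos_left h1 ht)
  · exact le_max_of_le_right (mul_le_mul_of_nonneg_left h2 ht)

/-- Remark after Proposition 5: if aggregating out the continuous variable `x_c`
flips the sign of the coefficient of `x_r` (so `a_r + a'_r ≤ 0` while `x_r ≥ 0`)
and the propagation residual `κ` is positive, then the aggregated constraint is
infeasible over the box `[ℓ², u²]`. -/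
theorem aggregation_infeasible_of_sign_flip
    {ι : Type*} [DecidableEq ι] (N : Finset ι) (r c : ι)
    (hrN : r ∈ N) (hcN : c ∈ N) (hrc : r ≠ c)
    (a a' : ι → ℝ) (hac : a c = 1) (ha'c : a' c = -1) (b b' : ℝ)
    (ℓ1 u1 ℓ2 u2 : ι → ℝ)
    (hbounds : ∀ j ∈ N.erase c, ℓ1 j ≤ ℓ2 j ∧ ℓ2 j ≤ u2 j ∧ u2 j ≤ u1 j)
    (hℓ2r : 0 ≤ ℓ2 r) (hsign : a r + a' r ≤ 0)
    (κ : ℝ)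
    (hκ : κ = (b - ∑ j ∈ (N.erase c).erase r, max (a j * ℓ1 j) (a j * u1 j))
        + (b' - ∑ j ∈ (N.erase c).erase r, max (a' j * ℓ2 j) (a' j * u2 j)))
    (hκpos : 0 < κ) :
    ¬ ∃ x : ι → ℝ, (∀ j ∈ N.erase c, ℓ2 j ≤ x j ∧ x j ≤ u2 j) ∧
      (a r + a' r) * x r
        + ∑ j ∈ (N.erase c).erase r, (a j + a' j) * x j ≥ b + b' := by
  rintro ⟨x, hx, hineq⟩
  have hrm : r ∈ N.erase c := Finset.mem_erase.2 ⟨hrc, hrN⟩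
  have hxr : (a r + a' r) * x r ≤ 0 :=
    mul_nonpos_of_nonpos_of_nonneg hsign (le_trans hℓ2r (hx r hrm).1)
  have hsum : ∑ j ∈ (N.erase c).erase r, (a j + a' j) * x j ≤
      ∑ j ∈ (N.erase c).erase r, max (a j * ℓ1 j) (a j * u1 j)
      + ∑ j ∈ (N.erase c).erase r, max (a' j * ℓ2 j) (a' j * u2 j) := by
    rw [← Finset.sum_add_distrib]
    apply Finset.sum_le_sum
    intro j hj
    have hjN := Finset.mem_of_mem_erase hj
    obtain ⟨h1, h2, h3⟩ := hbounds j hjN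
    obtain ⟨h4, h5⟩ := hx j hjN
    rw [add_mul]
    exact add_le_add (mul_le_max_of_mem (le_trans h1 h4) (le_trans h5 h3))
      (mul_le_max_of_mem h4 h5)
  linarith
end

section
/- Let J and K be disjoint finite index sets, a : J ∪ K → ℝ, and b ∈ ℝ with b ∉ ℤ. Let f(t) := t − ⌊t⌋, so f(b) > 0. Then every x with x_j ∈ ℤ, x_j ≥ 0 for j ∈ J and x_k ∈ ℝ, x_k ≥ 0 for k ∈ K that satisfies Σ_{j∈J∪K} a_j x_j ≥ b also satisfies the mixed integer rounding (MIR) cut Σ_{k∈K, a_k>0} (a_k / f(b))·x_k + Σ_{j∈J} ( ⌊a_j⌋ + min(1, f(a_j)/f(b)) )·x_j ≥ ⌈b⌉. -/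
/-!
Split each integer coefficient as `⌊a⌋ + fract a` when `fract a ≤ fract b` and round it up to
`⌊a⌋ + 1` otherwise; keep only the positive continuous terms. This relaxes the inequality to
`y + w ≥ b` with `y` an integer and `w ≥ 0`, and the MIR cut reads exactly `y + w / fract b ≥ ⌈b⌉`,
which holds because either `y ≥ ⌈b⌉` or `w ≥ (⌈b⌉ - y) · fract b`.
-/

open Finset

theorem Int.ceil_le_add_div_fract {b w : ℝ} {y : ℤ} (hb : 0 < Int.fract b) (hw : 0 ≤ w)
    (h : b ≤ y + w) : (⌈b⌉ : ℝ) ≤ y + w / Int.fract b := by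
  rcases le_or_gt ⌈b⌉ y with hy | hy
  · have : (⌈b⌉ : ℝ) ≤ y := by exact_mod_cast hy
    linarith [div_nonneg hw hb.le]
  · have hceil : ⌈b⌉ = ⌊b⌋ + 1 :=
      (Int.ceil_eq_floor_add_one_iff_notMem b).mpr fun ⟨z, hz⟩ => by simp [← hz] at hb
    have hd : (0 : ℝ) ≤ ⌊b⌋ - y := by
      rw [hceil] at hy
      exact_mod_cast (by omega : (0 : ℤ) ≤ ⌊b⌋ - y)
    have hfl := Int.floor_add_fract b
    have hw' : (⌈b⌉ - y) * Int.fract b ≤ w := by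
      rw [hceil]
      push_cast
      nlinarith [Int.fract_lt_one b]
    rw [← le_div_iff₀ hb] at hw'
    linarith

theorem exists_int_add_nonneg_of_mir_coeff (a : ℝ) {f : ℝ} (hf : 0 < f) :
    ∃ n : ℤ, ∃ r : ℝ, 0 ≤ r ∧ a ≤ n + r ∧ ⌊a⌋ + min 1 (Int.fract a / f) = n + r / f := by
  rcases le_or_gt (Int.fract a) f with ha | ha
  · refine ⟨⌊a⌋, Int.fract a, Int.fract_nonneg a, (Int.floor_add_fract a).ge, ?_⟩
    rw [min_eq_right ((div_le_one hf).mpr ha)]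
  · refine ⟨⌊a⌋ + 1, 0, le_rfl, by simpa using (Int.lt_floor_add_one a).le, ?_⟩
    rw [min_eq_left ((one_lt_div hf).mpr ha).le]
    push_cast
    ring

theorem Finset.sum_mul_le_sum_filter_pos {ι : Type*} (K : Finset ι) (a x : ι → ℝ)
    (hx : ∀ k ∈ K, 0 ≤ x k) :
    ∑ k ∈ K, a k * x k ≤ ∑ k ∈ K.filter (fun k => 0 < a k), a k * x k := by
  rw [sum_filter]
  gcongr with k hk
  split_ifs with ha
  · rfl
  · exact mul_nonpos_of_nonpos_of_nonneg (not_lt.mp ha) (hx k hk)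

/-- Validity of the mixed integer rounding (MIR) cut for a single inequality over
nonnegative integer variables `J` and nonnegative continuous variables `K`. -/
theorem mir_cut_valid
    {ι : Type*} [DecidableEq ι] (J K : Finset ι) (hJK : Disjoint J K)
    (a : ι → ℝ) (b : ℝ) (hb : ¬ ∃ z : ℤ, (z : ℝ) = b)
    (x : ι → ℝ)
    (hxJ : ∀ j ∈ J, ∃ z : ℤ, x j = (z : ℝ))
    (hxJ0 : ∀ j ∈ J, 0 ≤ x j)
    (hxK0 : ∀ k ∈ K, 0 ≤ x k)
    (hsat : ∑ j ∈ J ∪ K, a j * x j ≥ b) :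
    ∑ k ∈ K.filter (fun k => 0 < a k), (a k / Int.fract b) * x k
      + ∑ j ∈ J, ((⌊a j⌋ : ℝ) + min 1 (Int.fract (a j) / Int.fract b)) * x j
      ≥ (⌈b⌉ : ℝ) := by
  have hf : 0 < Int.fract b := Int.fract_pos.mpr fun h => hb ⟨⌊b⌋, h.symm⟩
  choose n r hr0 hle hcoeff using fun j => exists_int_add_nonneg_of_mir_coeff (a j) hf
  set y : ℤ := ∑ j ∈ J, n j * ⌊x j⌋
  set w : ℝ := ∑ j ∈ J, r j * x j + ∑ k ∈ K.filter (fun k => 0 < a k), a k * x k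
  have hy : (y : ℝ) = ∑ j ∈ J, n j * x j := by
    push_cast [y]
    refine sum_congr rfl fun j hj => ?_
    obtain ⟨z, hz⟩ := hxJ j hj
    rw [hz, Int.floor_intCast]
  have hw : 0 ≤ w := add_nonneg
    (sum_nonneg fun j hj => mul_nonneg (hr0 j) (hxJ0 j hj))
    (sum_nonneg fun k hk => mul_nonneg (mem_filter.mp hk).2.le (hxK0 k (mem_filter.mp hk).1))
  have hrelax : b ≤ y + w := calc
    b ≤ ∑ j ∈ J, a j * x j + ∑ k ∈ K, a k * x k := by rwa [← sum_union hJK]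
    _ ≤ ∑ j ∈ J, (n j + r j) * x j + ∑ k ∈ K.filter (fun k => 0 < a k), a k * x k := by
      refine add_le_add (sum_le_sum fun j hj => ?_) (sum_mul_le_sum_filter_pos K a x hxK0)
      exact mul_le_mul_of_nonneg_right (hle j) (hxJ0 j hj)
    _ = y + w := by simp only [hy, w, add_mul, sum_add_distrib]; ring
  have hcut : ∑ k ∈ K.filter (fun k => 0 < a k), (a k / Int.fract b) * x k
      + ∑ j ∈ J, ((⌊a j⌋ : ℝ) + min 1 (Int.fract (a j) / Int.fract b)) * x j
      = y + w / Int.fract b := by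
    simp only [hcoeff, hy, w, add_mul, sum_add_distrib, add_div, sum_div, div_mul_eq_mul_div]
    ring
  rw [ge_iff_le, hcut]
  exact Int.ceil_le_add_div_fract hf hw hrelax
end
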